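/- Let S be a left I-order in a primitive inverse semigroup Q with zero. Then S is a straight left I-order: every nonzero q ∈ Q can be written as q = a⁻¹b with a, b ∈ S and a R b in Q. -/

import Mathlib

/-- An inverse semigroup structure on a semigroup with zero, given by an inverse map. -/
def IsInverseSemigroup (Q : Type*) [SemigroupWithZero Q] (inv : Q → Q) : Prop :=
  (∀ a : Q, a * inv a * a = a) ∧ (∀ a : Q, inv a * a * inv a = inv a) ∧
  (∀ e f : Q, e * e = e → f * f = f → e * f = f * e)

/-- A primitive inverse semigroup: all nonzero idempotents are primitive. -/
def IsPrimitiveInvSemigroup (Q : Type*) [SemigroupWithZero Q] (inv : Q → Q) : Prop :=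
  IsInverseSemigroup Q inv ∧
  ∀ e : Q, e * e = e → e ≠ 0 →
    ∀ f : Q, f * f = f → e * f = f → f * e = f → f = 0 ∨ f = e

/-- Green's R relation (via Q¹). -/
def GreenR {Q : Type*} [SemigroupWithZero Q] (a b : Q) : Prop :=
  a = b ∨ ∃ u v : Q, a * u = b ∧ b * v = a

/-- Green's L relation (via Q¹). -/
def GreenL {Q : Type*} [SemigroupWithZero Q] (a b : Q) : Prop :=
  a = b ∨ ∃ u v : Q, u * a = b ∧ v * b = a

/-- Categorical at 0. -/
def CategoricalAtZero (S : Type*) [SemigroupWithZero S] : Prop :=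
  ∀ a b c : S, a * b ≠ 0 → b * c ≠ 0 → a * b * c ≠ 0

/-- 0-cancellative. -/
def ZeroCancellative (S : Type*) [SemigroupWithZero S] : Prop :=
  (∀ a b c : S, a * b = a * c → a * b ≠ 0 → b = c) ∧
  (∀ a b c : S, b * a = c * a → b * a ≠ 0 → b = c)

/-- The relation R* on a semigroup, defined via S¹ = WithOne S. -/
def RStar {S : Type*} [SemigroupWithZero S] (a b : S) : Prop :=
  ∀ x y : WithOne S, x * (a : WithOne S) = y * (a : WithOne S) ↔
    x * (b : WithOne S) = y * (b : WithOne S)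

/-- The relation λ on a whole semigroup with zero. -/
def Lam {S : Type*} [SemigroupWithZero S] (a b : S) : Prop :=
  (a = 0 ∧ b = 0) ∨ ∃ x y : S, x * a = y * b ∧ x * a ≠ 0

/-- The relation λ relative to a subset S of Q. -/
def LamOn {Q : Type*} [SemigroupWithZero Q] (S : Set Q) (a b : Q) : Prop :=
  (a = 0 ∧ b = 0) ∨ ∃ x ∈ S, ∃ y ∈ S, x * a = y * b ∧ x * a ≠ 0

/-- The relation ρ relative to a subset S of Q. -/
def RhoOn {Q : Type*} [SemigroupWithZero Q] (S : Set Q) (a b : Q) : Prop :=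
  (a = 0 ∧ b = 0) ∨ ∃ x ∈ S, ∃ y ∈ S, a * x = b * y ∧ a * x ≠ 0

/-- The relation R* on a subset S of Q, defined via S¹. -/
def RStarOn {Q : Type*} [SemigroupWithZero Q] (S : Set Q) (a b : Q) : Prop :=
  (∀ x ∈ S, ∀ y ∈ S, (x * a = y * a ↔ x * b = y * b)) ∧
  (∀ x ∈ S, (x * a = a ↔ x * b = b)) ∧
  (∀ y ∈ S, (a = y * a ↔ b = y * b))

/-- S is a subsemigroup of Q. -/
def IsSubsemigroup {Q : Type*} [SemigroupWithZero Q] (S : Set Q) : Prop :=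
  ∀ a ∈ S, ∀ b ∈ S, a * b ∈ S

/-- S is a left I-order in Q (with respect to the inverse map `inv`). -/
def IsLeftIOrder {Q : Type*} [SemigroupWithZero Q] (S : Set Q) (inv : Q → Q) : Prop :=
  IsSubsemigroup S ∧ ∀ q : Q, ∃ a ∈ S, ∃ b ∈ S, q = inv a * b

/-! Nonzero idempotents of a primitive inverse semigroup are pairwise orthogonal: if `e * f ≠ 0`
then `e * f` is a nonzero idempotent below both `e` and `f`, so `e = e * f = f`. Any expression
`q = a⁻¹ * b ≠ 0` factors as `a⁻¹ * (a * a⁻¹) * (b * b⁻¹) * b`, so `a * a⁻¹` and `b * b⁻¹` are not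
orthogonal, hence equal, which is exactly `a R b`. Thus every representation of a nonzero element
given by the left I-order is already a straight one. -/

namespace IsInverseSemigroup

variable {Q : Type*} [SemigroupWithZero Q] {inv : Q → Q}

lemma isIdempotentElem_mul_inv (hQ : IsInverseSemigroup Q inv) (a : Q) :
    IsIdempotentElem (a * inv a) := by
  rw [IsIdempotentElem, ← mul_assoc, hQ.1 a]

lemma commute_of_isIdempotentElem (hQ : IsInverseSemigroup Q inv) {e f : Q}
    (he : IsIdempotentElem e) (hf : IsIdempotentElem f) : Commute e f :=
  hQ.2.2 e f he hf

lemma mul_mul_inv_ne_zero_of_inv_mul_ne_zero (hQ : IsInverseSemigroup Q inv) {a b : Q}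
    (hab : inv a * b ≠ 0) : a * inv a * (b * inv b) ≠ 0 := by
  have hfactor : inv a * b = inv a * (a * inv a * (b * inv b)) * b := by
    calc inv a * b = (inv a * a * inv a) * (b * inv b * b) := by rw [hQ.2.1 a, hQ.1 b]
      _ = inv a * (a * inv a * (b * inv b)) * b := by simp only [mul_assoc]
  intro h
  rw [hfactor, h, mul_zero, zero_mul] at hab
  exact hab rfl

lemma greenR_of_mul_inv_eq (hQ : IsInverseSemigroup Q inv) {a b : Q}
    (h : a * inv a = b * inv b) : GreenR a b := by
  refine Or.inr ⟨inv a * b, inv b * a, ?_, ?_⟩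
  · rw [← mul_assoc, h, hQ.1 b]
  · rw [← mul_assoc, ← h, hQ.1 a]

end IsInverseSemigroup

namespace IsPrimitiveInvSemigroup

variable {Q : Type*} [SemigroupWithZero Q] {inv : Q → Q}

lemma eq_of_mul_ne_zero (hQ : IsPrimitiveInvSemigroup Q inv) {e f : Q}
    (he : IsIdempotentElem e) (hf : IsIdempotentElem f) (hef : e * f ≠ 0) : e = f := by
  have hcomm : Commute e f := hQ.1.commute_of_isIdempotentElem he hf
  have hidem : IsIdempotentElem (e * f) := he.mul_of_commute hcomm hf
  have he_ne : e ≠ 0 := by rintro rfl; exact hef (zero_mul f)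
  have hf_ne : f ≠ 0 := by rintro rfl; exact hef (mul_zero e)
  have hef_eq_e : e * f = e := by
    refine (hQ.2 e he he_ne (e * f) hidem ?_ ?_).resolve_left hef
    · rw [← mul_assoc, he.eq]
    · rw [mul_assoc, ← hcomm.eq, ← mul_assoc, he.eq]
  have hef_eq_f : e * f = f := by
    refine (hQ.2 f hf hf_ne (e * f) hidem ?_ ?_).resolve_left hef
    · rw [← mul_assoc, ← hcomm.eq, mul_assoc, hf.eq]
    · rw [mul_assoc, hf.eq]
  rw [← hef_eq_e, hef_eq_f]

lemma greenR_of_inv_mul_ne_zero (hQ : IsPrimitiveInvSemigroup Q inv) {a b : Q}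
    (hab : inv a * b ≠ 0) : GreenR a b :=
  hQ.1.greenR_of_mul_inv_eq <| hQ.eq_of_mul_ne_zero (hQ.1.isIdempotentElem_mul_inv a)
    (hQ.1.isIdempotentElem_mul_inv b) (hQ.1.mul_mul_inv_ne_zero_of_inv_mul_ne_zero hab)

end IsPrimitiveInvSemigroup

theorem stmt_10 {Q : Type*} [SemigroupWithZero Q] (inv : Q → Q)
    (hQ : IsPrimitiveInvSemigroup Q inv) (S : Set Q)
    (hS : IsLeftIOrder S inv) :
    ∀ q : Q, q ≠ 0 → ∃ a ∈ S, ∃ b ∈ S, q = inv a * b ∧ GreenR a b := by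
  intro q hq
  obtain ⟨a, ha, b, hb, rfl⟩ := hS.2 q
  exact ⟨a, ha, b, hb, rfl, hQ.greenR_of_inv_mul_ne_zero hq⟩
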